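/- Let P be a broadcast protocol, F ⊆ Q a target set, and k ≥ 1. There exists a k-constrained initial execution of the reconfigurable broadcast network defined by P that visits a configuration in which at least one node is labelled by a state of F (coverability) if and only if there exists an unconstrained initial execution that visits such a configuration. -/

import Mathlib

/-!
Reconfigurable broadcast networks (Maubert–Pinchinat–Schlehuber-Caissier style
formalization of "Reconfiguration and message losses in parameterized broadcast networks").

A broadcast protocol is a tuple (Q, I, Σ, Δ); configurations are finite
Q-labelled simple graphs; steps are reconfiguration steps (labels unchanged,
edges arbitrary) or communication steps (edges unchanged, one node broadcasts,
its neighbours receive); executions strictly alternate the two kinds of steps.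
-/

namespace RBN

/-- An action of a broadcast protocol: broadcast `!!m` or reception `??m`. -/
inductive BAct (M : Type) where
  | brd : M → BAct M
  | rcv : M → BAct M

/-- A broadcast protocol `(Q, I, Σ, Δ)` with state space `Q` and message alphabet `M`:
initial states `init ⊆ Q` and transition relation `trans ⊆ Q × BAct M × Q`. -/
structure BroadcastProtocol (Q M : Type) where
  init : Set Q
  trans : Q → BAct M → Q → Prop

/-- A configuration: an undirected graph without self-loops on node set `V`,
whose nodes are labelled by states in `Q`. -/
structure Config (V Q : Type) where
  graph : SimpleGraph V
  label : V → Q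

/-- The distance `d(G, G')` between two configurations on the same node set with
the same labelling: the number of edges in the symmetric difference of the edge sets. -/
noncomputable def dist {V Q : Type} (G G' : Config V Q) : ℕ :=
  (symmDiff G.graph.edgeSet G'.graph.edgeSet).ncard

/-- The number of edges incident to node `v` in the symmetric difference of
the edge sets of `G` and `G'`. -/
noncomputable def localDist {V Q : Type} (v : V) (G G' : Config V Q) : ℕ :=
  {e ∈ symmDiff G.graph.edgeSet G'.graph.edgeSet | v ∈ e}.ncard

/-- A reconfiguration step: labels are unchanged and edges may change arbitrarily. -/
def ReconfStep {V Q : Type} (G G' : Config V Q) : Prop :=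
  G'.label = G.label

/-- A communication step: edges are unchanged, some node `v` broadcasts a message `m`
(performing a transition `(L v, !!m, L' v) ∈ Δ`), every neighbour `u` of `v` receives it
(performing `(L u, ??m, L' u) ∈ Δ`), and every other node keeps its label. -/
def CommStep {V Q M : Type} (P : BroadcastProtocol Q M) (G G' : Config V Q) : Prop :=
  G'.graph = G.graph ∧
  ∃ (v : V) (m : M),
    P.trans (G.label v) (.brd m) (G'.label v) ∧
    (∀ u, G.graph.Adj v u → P.trans (G.label u) (.rcv m) (G'.label u)) ∧
    (∀ u, u ≠ v → ¬ G.graph.Adj v u → G'.label u = G.label u)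

/-- The type of a step: communication or reconfiguration. -/
inductive StepType where
  | comm : StepType
  | reconf : StepType
deriving DecidableEq

/-- An execution of length `r` of the reconfigurable broadcast network defined by `P`,
with node set `V`: a sequence of configurations `cfg 0, …, cfg r` together with a
classification `ty` of each step, such that each step is of its declared kind and
communication and reconfiguration steps strictly alternate (reconfiguration steps
may be trivial). -/
structure Execution {Q M : Type} (V : Type) (P : BroadcastProtocol Q M) (r : ℕ) where
  cfg : ℕ → Config V Q
  ty : ℕ → StepType
  step_comm : ∀ i < r, ty i = .comm → CommStep P (cfg i) (cfg (i + 1))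
  step_reconf : ∀ i < r, ty i = .reconf → ReconfStep (cfg i) (cfg (i + 1))
  alternate : ∀ i, i + 1 < r → ty (i + 1) ≠ ty i

variable {Q M V : Type} {P : BroadcastProtocol Q M} {r : ℕ}

/-- An execution is initial if every node of its first configuration is labelled
by an initial state. -/
def Execution.Initial (ρ : Execution V P r) : Prop :=
  ∀ v, (ρ.cfg 0).label v ∈ P.init

/-- An execution synchronizes in `F` if every node of its last configuration is
labelled by a state in `F`. -/
def Execution.Synchronizes (ρ : Execution V P r) (F : Set Q) : Prop :=
  ∀ v, (ρ.cfg r).label v ∈ F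

/-- An execution is `k`-constrained if every reconfiguration step changes at most
`k` edges. -/
def Execution.KConstrained (k : ℕ) (ρ : Execution V P r) : Prop :=
  ∀ i < r, ρ.ty i = .reconf → dist (ρ.cfg i) (ρ.cfg (i + 1)) ≤ k

/-- An execution is strongly `k`-constrained if every reconfiguration step changes
exactly `k` edges. -/
def Execution.StronglyKConstrained (k : ℕ) (ρ : Execution V P r) : Prop :=
  ∀ i < r, ρ.ty i = .reconf → dist (ρ.cfg i) (ρ.cfg (i + 1)) = k

/-- An execution is `k`-locally-constrained if, at every step and for every node `v`,
at most `k` edges incident to `v` belong to the symmetric difference of the edge sets. -/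
def Execution.LocallyConstrained (k : ℕ) (ρ : Execution V P r) : Prop :=
  ∀ (v : V), ∀ i < r, localDist v (ρ.cfg i) (ρ.cfg (i + 1)) ≤ k

/-- An execution is `f`-constrained if every reconfiguration step changes at most
`f n` edges, where `n` is the number of nodes. -/
def Execution.FConstrained [Fintype V] (f : ℕ → ℕ) (ρ : Execution V P r) : Prop :=
  ∀ i < r, ρ.ty i = .reconf → dist (ρ.cfg i) (ρ.cfg (i + 1)) ≤ f (Fintype.card V)

/-- The number of communication steps of an execution. -/
def Execution.nbcomm (ρ : Execution V P r) : ℕ :=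
  ((Finset.range r).filter (fun i => ρ.ty i = StepType.comm)).card

/-- The total number of edge reconfigurations along an execution. -/
noncomputable def Execution.nbreconfig (ρ : Execution V P r) : ℕ :=
  ∑ i ∈ (Finset.range r).filter (fun i => ρ.ty i = StepType.reconf),
    dist (ρ.cfg i) (ρ.cfg (i + 1))

/-- An execution is `k`-balanced if it starts and ends with a communication step
and `nbreconfig ρ ≤ k * (nbcomm ρ - 1)`. -/
def Execution.Balanced (k : ℕ) (ρ : Execution V P r) : Prop :=
  1 ≤ r ∧ ρ.ty 0 = StepType.comm ∧ ρ.ty (r - 1) = StepType.comm ∧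
    ρ.nbreconfig ≤ k * (ρ.nbcomm - 1)

/-- Juxtaposition `G ⊕ H` of two configurations: disjoint union. -/
def Config.juxt {V W Q : Type} (G : Config V Q) (H : Config W Q) : Config (V ⊕ W) Q where
  graph := SimpleGraph.fromEdgeSet
    (Sym2.map Sum.inl '' G.graph.edgeSet ∪ Sym2.map Sum.inr '' H.graph.edgeSet)
  label := Sum.elim G.label H.label

/-- `G ^ N`: juxtaposition of `N` disjoint copies of `G`. -/
def Config.pow {V Q : Type} (G : Config V Q) (N : ℕ) : Config (V × Fin N) Q where
  graph := SimpleGraph.fromEdgeSet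
    (⋃ i : Fin N, Sym2.map (fun v => (v, i)) '' G.graph.edgeSet)
  label := fun p => G.label p.1

/-- Renaming the nodes of a configuration along a bijection. -/
def Config.rename {V W Q : Type} (e : V ≃ W) (G : Config V Q) : Config W Q where
  graph := SimpleGraph.comap e.symm G.graph
  label := G.label ∘ e.symm


/-!
The states that some node can reach are exactly those generated by the saturation `Reachable`:
initial states, states entered by a broadcast, and states entered by receiving a message that
some reachable state can broadcast. Every state along an initial execution is reachable.
Conversely, a reachable state is covered by rounds changing one edge each that end without
edges: for a reception, run disjoint copies of the executions covering the receiver and, twice,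
the broadcaster one after the other, connect the receiver to one broadcaster by a single edge for
one broadcast, and remove that edge again while the other broadcaster broadcasts alone.
-/

open Relation SimpleGraph Function

section

variable {W : Type}

namespace Config

lemma juxt_graph (G : Config V Q) (H : Config W Q) :
    (G.juxt H).graph = G.graph.map Embedding.inl ⊔ H.graph.map Embedding.inr := by
  rw [← fromEdgeSet_edgeSet (_ ⊔ _), edgeSet_sup, edgeSet_map, edgeSet_map]
  rfl

@[simp]
lemma juxt_adj_inl_inl {G : Config V Q} {H : Config W Q} {a b : V} :
    (G.juxt H).graph.Adj (.inl a) (.inl b) ↔ G.graph.Adj a b := by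
  simp [juxt_graph]

@[simp]
lemma juxt_adj_inr_inr {G : Config V Q} {H : Config W Q} {a b : W} :
    (G.juxt H).graph.Adj (.inr a) (.inr b) ↔ H.graph.Adj a b := by
  simp [juxt_graph]

@[simp]
lemma not_juxt_adj_inl_inr {G : Config V Q} {H : Config W Q} {a : V} {b : W} :
    ¬ (G.juxt H).graph.Adj (.inl a) (.inr b) := by
  simp [juxt_graph]

@[simp]
lemma not_juxt_adj_inr_inl {G : Config V Q} {H : Config W Q} {a : W} {b : V} :
    ¬ (G.juxt H).graph.Adj (.inr a) (.inl b) := by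
  simp [juxt_graph]

lemma juxt_graph_eq_bot {G : Config V Q} {H : Config W Q} (hG : G.graph = ⊥)
    (hH : H.graph = ⊥) : (G.juxt H).graph = ⊥ := by
  ext (a | a) (b | b) <;> simp [hG, hH]

lemma rename_juxt_sumComm (G : Config V Q) (H : Config W Q) :
    (G.juxt H).rename (Equiv.sumComm V W) = H.juxt G := by
  rw [rename, Config.mk.injEq]
  constructor
  · ext (a | a) (b | b) <;> simp
  · ext (a | a) <;> rfl

lemma rename_graph (e : V ≃ W) (G : Config V Q) :
    (G.rename e).graph = G.graph.map e.toEmbedding :=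
  G.graph.comap_symm e

end Config

lemma dist_self (G : Config V Q) : dist G G = 0 := by
  simp [dist]

lemma dist_comm (G G' : Config V Q) : dist G G' = dist G' G := by
  rw [dist, dist, symmDiff_comm]

lemma dist_le_one_of_eq_bot_of_eq_edge {G G' : Config V Q} {u w : V} (hG : G.graph = ⊥)
    (hG' : G'.graph = edge u w) : dist G G' ≤ 1 := by
  rw [dist, hG, hG', edgeSet_bot, ← Set.bot_eq_empty, bot_symmDiff]
  exact (Set.ncard_le_ncard edgeSet_edge_subset).trans (Set.ncard_singleton _).le

lemma dist_rename (e : V ≃ W) (G G' : Config V Q) :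
    dist (G.rename e) (G'.rename e) = dist G G' := by
  have hinj : Injective e.toEmbedding.sym2Map := e.toEmbedding.sym2Map.injective
  rw [dist, dist, Config.rename_graph, Config.rename_graph, edgeSet_map, edgeSet_map,
    ← Set.image_symmDiff hinj, Set.ncard_image_of_injective _ hinj]

lemma dist_juxt_left (G G' : Config V Q) (H : Config W Q) :
    dist (G.juxt H) (G'.juxt H) = dist G G' := by
  rw [dist, dist, ← Set.ncard_preimage_of_injective_subset_range
    (Sym2.map.injective Sum.inl_injective)]
  · congr 1
    ext e
    induction e using Sym2.ind
    simp [Set.mem_symmDiff]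
  · intro e he
    induction e using Sym2.ind with | _ x y => ?_
    rcases x with a | a <;> rcases y with b | b
    · exact ⟨s(a, b), rfl⟩
    all_goals simp [Set.mem_symmDiff] at he

namespace CommStep

variable {G G' : Config V Q}

lemma juxt_left (h : CommStep P G G') (H : Config W Q) :
    CommStep P (G.juxt H) (G'.juxt H) := by
  obtain ⟨hgraph, v, m, hbrd, hrcv, hrest⟩ := h
  refine ⟨by rw [Config.juxt_graph, Config.juxt_graph, hgraph], .inl v, m, hbrd, ?_, ?_⟩
  · rintro (b | b) hadj
    · exact hrcv b (by simpa using hadj)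
    · simp at hadj
  · rintro (b | b) hne hnadj
    · exact hrest b (by simpa using hne) (by simpa using hnadj)
    · rfl

lemma rename (h : CommStep P G G') (e : V ≃ W) : CommStep P (G.rename e) (G'.rename e) := by
  obtain ⟨hgraph, v, m, hbrd, hrcv, hrest⟩ := h
  refine ⟨by rw [Config.rename, Config.rename, hgraph], e v, m, ?_, fun u hadj => ?_,
    fun u hne hnadj => ?_⟩
  · simpa [Config.rename] using hbrd
  · simpa [Config.rename] using hrcv (e.symm u) (by simpa [Config.rename] using hadj)
  · exact hrest (e.symm u) (by simpa [Equiv.symm_apply_eq] using hne)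
      (by simpa [Config.rename] using hnadj)

end CommStep

lemma commStep_update_of_isolated [DecidableEq V] {G : Config V Q} {v : V} {m : M} {q : Q}
    (hv : ∀ u, ¬ G.graph.Adj v u) (h : P.trans (G.label v) (.brd m) q) :
    CommStep P G ⟨G.graph, Function.update G.label v q⟩ :=
  ⟨rfl, v, m, by simpa using h, fun u hu => absurd hu (hv u),
    fun _ hne _ => Function.update_of_ne hne _ _⟩

lemma commStep_update_update_of_graph_eq_edge [DecidableEq V] {G : Config V Q} {u w : V}
    {m : M} {p q : Q} (hG : G.graph = edge u w) (huw : u ≠ w)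
    (hu : P.trans (G.label u) (.rcv m) q) (hw : P.trans (G.label w) (.brd m) p) :
    CommStep P G ⟨G.graph, Function.update (Function.update G.label u q) w p⟩ := by
  refine ⟨rfl, w, m, by simpa using hw, fun x hx => ?_, fun x hxw hx => ?_⟩
  · obtain rfl : x = u := by rw [hG, edge_adj] at hx; grind
    simpa [huw] using hu
  · have hxu : x ≠ u := by rintro rfl; exact hx (by rw [hG, edge_adj]; grind)
    simp [hxw, hxu]

def Round (P : BroadcastProtocol Q M) (k : ℕ) (G G' : Config V Q) : Prop :=
  ∃ G₁, ReconfStep G G₁ ∧ dist G G₁ ≤ k ∧ CommStep P G₁ G'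

namespace Round

variable {k : ℕ} {G G' : Config V Q}

lemma mono {k' : ℕ} (h : Round P k G G') (hk : k ≤ k') : Round P k' G G' :=
  let ⟨G₁, hre, hd, hc⟩ := h
  ⟨G₁, hre, hd.trans hk, hc⟩

lemma of_commStep (h : CommStep P G G') : Round P k G G' :=
  ⟨G, rfl, (dist_self G).trans_le k.zero_le, h⟩

lemma rename (e : V ≃ W) (h : Round P k G G') : Round P k (G.rename e) (G'.rename e) :=
  let ⟨G₁, hre, hd, hc⟩ := h
  ⟨G₁.rename e, congrArg (· ∘ e.symm) hre, (dist_rename e G G₁).trans_le hd,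
    hc.rename e⟩

lemma juxt_left (H : Config W Q) (h : Round P k G G') : Round P k (G.juxt H) (G'.juxt H) :=
  let ⟨G₁, hre, hd, hc⟩ := h
  ⟨G₁.juxt H, congrArg (Sum.elim · H.label) hre, (dist_juxt_left G G₁ H).trans_le hd,
    hc.juxt_left H⟩

lemma juxt_right (H : Config W Q) (h : Round P k G G') : Round P k (H.juxt G) (H.juxt G') := by
  simpa only [Config.rename_juxt_sumComm] using (h.juxt_left H).rename (Equiv.sumComm V W)

end Round

lemma reflTransGen_round_juxt {k : ℕ} {G G' : Config V Q} {H H' : Config W Q}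
    (hG : ReflTransGen (Round P k) G G') (hH : ReflTransGen (Round P k) H H') :
    ReflTransGen (Round P k) (G.juxt H) (G'.juxt H') :=
  (hG.lift (·.juxt H) fun _ _ => Round.juxt_left H).trans
    (hH.lift (G'.juxt ·) fun _ _ => Round.juxt_right G')

end

namespace Execution

/-- The step type `.reconf` at `0` is what lets `consRound` extend this execution. -/
def nil (G : Config V Q) : Execution V P 0 where
  cfg _ := G
  ty _ := .reconf
  step_comm _ hi := absurd hi (Nat.not_lt_zero _)
  step_reconf _ hi := absurd hi (Nat.not_lt_zero _)
  alternate _ hi := absurd hi (Nat.not_lt_zero _)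

def consRound (ρ : Execution V P r) (hρ : ρ.ty 0 = .reconf) {G G₁ : Config V Q}
    (hre : ReconfStep G G₁) (hc : CommStep P G₁ (ρ.cfg 0)) : Execution V P (r + 2) where
  cfg
    | 0 => G
    | 1 => G₁
    | i + 2 => ρ.cfg i
  ty
    | 0 => .reconf
    | 1 => .comm
    | i + 2 => ρ.ty i
  step_comm
    | 0, _, h => nomatch h
    | 1, _, _ => hc
    | i + 2, hi, h => ρ.step_comm i (by omega) h
  step_reconf
    | 0, _, _ => hre
    | 1, _, h => nomatch h
    | i + 2, hi, h => ρ.step_reconf i (by omega) h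
  alternate
    | 0, _ => nofun
    | 1, _ => by simp [hρ]
    | i + 2, hi => ρ.alternate i (by omega)

end Execution

theorem exists_execution_of_reflTransGen_round {k : ℕ} {G₀ G : Config V Q}
    (h : ReflTransGen (Round P k) G₀ G) :
    ∃ (r : ℕ) (ρ : Execution V P r), ρ.cfg 0 = G₀ ∧ ρ.cfg r = G ∧ ρ.KConstrained k := by
  suffices ∃ (r : ℕ) (ρ : Execution V P r),
      ρ.ty 0 = .reconf ∧ ρ.cfg 0 = G₀ ∧ ρ.cfg r = G ∧ ρ.KConstrained k from
    let ⟨r, ρ, _, hρ⟩ := this; ⟨r, ρ, hρ⟩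
  induction h using ReflTransGen.head_induction_on with
  | refl => exact ⟨0, .nil G, rfl, rfl, rfl, fun _ hi => absurd hi (Nat.not_lt_zero _)⟩
  | head hround _ ih =>
    obtain ⟨G₁, hre, hd, hc⟩ := hround
    obtain ⟨r, ρ, hρ, rfl, hr, hk⟩ := ih
    refine ⟨r + 2, ρ.consRound hρ hre hc, rfl, rfl, hr, ?_⟩
    rintro (_ | _ | i) hi hty
    · exact hd
    · cases hty
    · exact hk i (by omega) hty

inductive Reachable (P : BroadcastProtocol Q M) : Q → Prop
  | init {q : Q} : q ∈ P.init → Reachable P q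
  | brd {p p' : Q} {m : M} : Reachable P p → P.trans p (.brd m) p' → Reachable P p'
  | rcv {q q' p p' : Q} {m : M} : Reachable P q → P.trans q (.rcv m) q' →
      Reachable P p → P.trans p (.brd m) p' → Reachable P q'

lemma Execution.reachable_label {ρ : Execution V P r} (hI : ρ.Initial) {i : ℕ} (hi : i ≤ r)
    (v : V) : Reachable P ((ρ.cfg i).label v) := by
  induction i generalizing v with
  | zero => exact .init (hI v)
  | succ i ih =>
    have ih := ih (by omega)
    cases hty : ρ.ty i with
    | comm =>
      obtain ⟨-, b, m, hbrd, hrcv, hrest⟩ := ρ.step_comm i (by omega) hty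
      by_cases hvb : v = b
      · subst hvb
        exact .brd (ih v) hbrd
      by_cases hadj : (ρ.cfg i).graph.Adj b v
      · exact .rcv (ih v) (hrcv v hadj) (ih b) hbrd
      · rw [hrest v hvb hadj]
        exact ih v
    | reconf =>
      rw [ρ.step_reconf i (by omega) hty]
      exact ih v

def OneEdgeCoverable (P : BroadcastProtocol Q M) (s : Q) : Prop :=
  ∃ (V : Type) (_ : Finite V) (G₀ G : Config V Q), (∀ v, G₀.label v ∈ P.init) ∧
    G.graph = ⊥ ∧ ReflTransGen (Round P 1) G₀ G ∧ ∃ v, G.label v = s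

/-- Removing the temporary edge `u — w` takes a second round, whose communication step is a lone
broadcast of `w'`. -/
lemma exists_reflTransGen_round_receive [DecidableEq V] {G : Config V Q} (hG : G.graph = ⊥)
    {u w w' : V} (huw : u ≠ w) (huw' : u ≠ w') (hww' : w ≠ w') {m : M} {q p p' : Q}
    (hu : P.trans (G.label u) (.rcv m) q) (hw : P.trans (G.label w) (.brd m) p)
    (hw' : P.trans (G.label w') (.brd m) p') :
    ∃ G', G'.graph = ⊥ ∧ G'.label u = q ∧ ReflTransGen (Round P 1) G G' := by
  set L := Function.update (Function.update G.label u q) w p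
  have hround₁ : Round P 1 G ⟨edge u w, L⟩ :=
    ⟨⟨edge u w, G.label⟩, rfl, dist_le_one_of_eq_bot_of_eq_edge hG rfl,
      commStep_update_update_of_graph_eq_edge rfl huw hu hw⟩
  have hLw' : L w' = G.label w' := by simp [L, huw'.symm, hww'.symm]
  have hround₂ : Round P 1 ⟨edge u w, L⟩ ⟨⊥, Function.update L w' p'⟩ :=
    ⟨⟨⊥, L⟩, rfl, by rw [dist_comm]; exact dist_le_one_of_eq_bot_of_eq_edge rfl rfl,
      commStep_update_of_isolated (fun _ h => h) (m := m) (by dsimp only; rwa [hLw'])⟩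
  exact ⟨_, rfl, by simp [L, huw, huw'], .tail (.single hround₁) hround₂⟩

lemma Reachable.oneEdgeCoverable {s : Q} (h : Reachable P s) : OneEdgeCoverable P s := by
  classical
  induction h with
  | @init q hq => exact ⟨Unit, inferInstance, ⟨⊥, fun _ => q⟩, ⟨⊥, fun _ => q⟩, fun _ => hq,
      rfl, .refl, (), rfl⟩
  | brd _ hbrd ih =>
    obtain ⟨V, _, G₀, G, hG₀, hG, hpath, v, rfl⟩ := ih
    exact ⟨V, inferInstance, G₀, ⟨G.graph, Function.update G.label v _⟩, hG₀, hG,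
      hpath.tail (.of_commStep (commStep_update_of_isolated (by simp [hG]) hbrd)), v, by simp⟩
  | rcv _ hrcv _ hbrd ihq ihp =>
    obtain ⟨V₁, _, G₀, G, hG₀, hG, hpath, u, rfl⟩ := ihq
    obtain ⟨V₂, _, H₀, H, hH₀, hH, hpath', w, rfl⟩ := ihp
    obtain ⟨K, hK, hKu, hpathK⟩ := exists_reflTransGen_round_receive
      (G := (G.juxt H).juxt H) (u := .inl (.inl u)) (w := .inl (.inr w)) (w' := .inr w)
      (Config.juxt_graph_eq_bot (Config.juxt_graph_eq_bot hG hH) hH) (by simp) (by simp) (by simp) hrcv hbrd hbrd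
    refine ⟨(V₁ ⊕ V₂) ⊕ V₂, inferInstance, (G₀.juxt H₀).juxt H₀, K, ?_, hK,
      (reflTransGen_round_juxt (reflTransGen_round_juxt hpath hpath') hpath').trans hpathK,
      _, hKu⟩
    rintro ((v | v) | v) <;> simp [Config.juxt, hG₀, hH₀]

theorem kConstrained_coverability_iff_unconstrained_general {Q M : Type}
    (P : BroadcastProtocol Q M) (F : Set Q) (k : ℕ) (hk : 1 ≤ k) :
    (∃ (n r : ℕ) (ρ : Execution (Fin n) P r),
        ρ.Initial ∧ ρ.KConstrained k ∧ ∃ i ≤ r, ∃ v, (ρ.cfg i).label v ∈ F) ↔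
    (∃ (n r : ℕ) (ρ : Execution (Fin n) P r),
        ρ.Initial ∧ ∃ i ≤ r, ∃ v, (ρ.cfg i).label v ∈ F) := by
  refine ⟨fun ⟨n, r, ρ, hI, _, hcover⟩ => ⟨n, r, ρ, hI, hcover⟩, ?_⟩
  rintro ⟨_, _, ρ, hI, i, hi, v, hvF⟩
  obtain ⟨V, _, G₀, G, hG₀, -, hpath, w, hw⟩ := (ρ.reachable_label hI hi v).oneEdgeCoverable
  let e := Finite.equivFin V
  obtain ⟨r, ρ', hρ'₀, hρ'r, hρ'k⟩ := exists_execution_of_reflTransGen_round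
    (hpath.lift (Config.rename e) fun _ _ h => (h.mono hk).rename e)
  refine ⟨Nat.card V, r, ρ', fun x => hρ'₀ ▸ hG₀ _, hρ'k, r, le_rfl, e w, ?_⟩
  simpa [hρ'r, Config.rename, hw] using hvF

/-- Remark: coverability is insensitive to `k`-constrained
reconfigurations.
For `k ≥ 1`, there exists a `k`-constrained initial execution visiting a configuration
in which some node is labelled by a state of `F` if, and only if, there exists an
unconstrained initial execution visiting such a configuration. -/
theorem kConstrained_coverability_iff_unconstrained {Q M : Type} [Finite Q] [Finite M]
    (P : BroadcastProtocol Q M) (F : Set Q) (k : ℕ) (hk : 1 ≤ k) :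
    (∃ (n r : ℕ) (ρ : Execution (Fin n) P r),
        ρ.Initial ∧ ρ.KConstrained k ∧ ∃ i ≤ r, ∃ v, (ρ.cfg i).label v ∈ F) ↔
    (∃ (n r : ℕ) (ρ : Execution (Fin n) P r),
        ρ.Initial ∧ ∃ i ≤ r, ∃ v, (ρ.cfg i).label v ∈ F) :=
  kConstrained_coverability_iff_unconstrained_general P F k hk

end RBN
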